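/- arXiv:2309.14577 — 5 statements merged into one kernel-verified Lean document; each statement's English description precedes it below -/
import Mathlib

section
/- Let $\Phi = \{\varphi_1, \ldots, \varphi_N\}$ be an iterated function system of contraction maps on $\mathbb{R}^d$ with attractor $K$, and let $C$ be a nonempty compact set with $\bigcup_{i=1}^N \varphi_i(C) \subseteq C$ (so that $K \subseteq C$). For each $k \ge 1$, let $M_k$ be the supremum of the diameters of the connected components of $\bigcup_{\sigma \in \{1,\ldots,N\}^k} \varphi_\sigma(C)$, where $\varphi_\sigma = \varphi_{\sigma_1} \circ \cdots \circ \varphi_{\sigma_k}$. If $M_k \to 0$ as $k \to \infty$, then $K$ is totally disconnected. -/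
/-!
Every point of the attractor `K` is, for each `k`, the image of a point of `K` under some
`φ_σ` with `|σ| = k`. Since `φ_σ` contracts by `ρ ^ k`, where `ρ = max_i r_i < 1`, and maps `C`
into `C`, the points of `K` are arbitrarily close to the closed set `C`, so `K ⊆ C`, and then
`K ⊆ ⋃_{|σ| = k} φ_σ(C)` for every `k`. A connected subset of `K` therefore lies in a single
connected component of each of these sets, so its diameter is at most `M_k → 0`.
-/

open Set Filter
open scoped ENNReal Topology

/-- Composition `φ_σ = φ_{σ 0} ∘ ⋯ ∘ φ_{σ (k-1)}` along a multi-index `σ`. -/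
def compIFS {N : ℕ} {α : Type*} (φ : Fin N → α → α) : {k : ℕ} → (Fin k → Fin N) → α → α
  | 0, _ => id
  | _ + 1, σ => φ (σ 0) ∘ compIFS φ (fun i => σ i.succ)

open Metric

section compIFS

variable {N : ℕ} {α : Type*} (φ : Fin N → α → α)

theorem compIFS_cons {k : ℕ} (i : Fin N) (σ : Fin k → Fin N) :
    compIFS φ (Fin.cons i σ : Fin (k + 1) → Fin N) = φ i ∘ compIFS φ σ := by
  simp only [compIFS, Fin.cons_zero, Fin.cons_succ]

theorem image_compIFS_subset {C : Set α} (hC : (⋃ i, φ i '' C) ⊆ C) :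
    ∀ {k : ℕ} (σ : Fin k → Fin N), compIFS φ σ '' C ⊆ C
  | 0, _ => by simp [compIFS]
  | _ + 1, σ => by
    rw [compIFS, image_comp]
    exact (image_mono (image_compIFS_subset hC _)).trans
      ((subset_iUnion (fun i => φ i '' C) (σ 0)).trans hC)

theorem subset_iUnion_image_compIFS {K : Set α} (hK : K ⊆ ⋃ i, φ i '' K) :
    ∀ k : ℕ, K ⊆ ⋃ σ : Fin k → Fin N, compIFS φ σ '' K
  | 0 => fun x hx => mem_iUnion.2 ⟨Fin.elim0, x, hx, rfl⟩
  | k + 1 => by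
    intro x hx
    obtain ⟨i, z, hz, rfl⟩ := mem_iUnion.1 (hK hx)
    obtain ⟨σ, y, hy, rfl⟩ := mem_iUnion.1 (subset_iUnion_image_compIFS hK k hz)
    exact mem_iUnion.2 ⟨Fin.cons i σ, y, hy, by rw [compIFS_cons]; rfl⟩

theorem lipschitzWith_compIFS [PseudoEMetricSpace α] {r : Fin N → NNReal} {ρ : NNReal}
    (hφ : ∀ i, LipschitzWith (r i) (φ i)) (hrρ : ∀ i, r i ≤ ρ) :
    ∀ {k : ℕ} (σ : Fin k → Fin N), LipschitzWith (ρ ^ k) (compIFS φ σ)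
  | 0, _ => by simpa [compIFS] using LipschitzWith.id
  | k + 1, σ => by
    refine ((hφ (σ 0)).comp (lipschitzWith_compIFS hφ hrρ _)).weaken ?_
    rw [pow_succ']
    exact mul_le_mul_left (hrρ _) _

theorem subset_of_isClosed_of_iUnion_image_subset [PseudoMetricSpace α] {ρ : NNReal}
    (hρ : ρ < 1) (hφ : ∀ {k : ℕ} (σ : Fin k → Fin N), LipschitzWith (ρ ^ k) (compIFS φ σ))
    {K C : Set α} (hKb : Bornology.IsBounded K) (hK : K ⊆ ⋃ i, φ i '' K)
    (hCne : C.Nonempty) (hCc : IsClosed C) (hC : (⋃ i, φ i '' C) ⊆ C) : K ⊆ C := by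
  obtain ⟨c, hc⟩ := hCne
  intro x hx
  rw [← hCc.closure_eq, EMetric.mem_closure_iff]
  intro ε hε
  have hD : ediam (insert c K) ≠ ⊤ := hKb.insert c |>.ediam_ne_top
  have hsmall : Tendsto (fun k : ℕ => (ρ : ℝ≥0∞) ^ k * ediam (insert c K)) atTop (𝓝 0) := by
    simpa using ENNReal.Tendsto.mul_const
      (ENNReal.tendsto_pow_atTop_nhds_zero_of_lt_one (by exact_mod_cast hρ)) (Or.inr hD)
  obtain ⟨k, hk⟩ := (hsmall.eventually (gt_mem_nhds hε)).exists
  obtain ⟨σ, y, hy, rfl⟩ := mem_iUnion.1 (subset_iUnion_image_compIFS φ hK k hx)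
  refine ⟨compIFS φ σ c, image_compIFS_subset φ hC σ (mem_image_of_mem _ hc), ?_⟩
  calc edist (compIFS φ σ y) (compIFS φ σ c) ≤ (ρ : ℝ≥0∞) ^ k * edist y c := by
        simpa using (hφ σ).edist_le_mul y c
    _ ≤ (ρ : ℝ≥0∞) ^ k * ediam (insert c K) := by
        gcongr
        exact edist_le_ediam_of_mem (mem_insert_of_mem _ hy) (mem_insert _ _)
    _ < ε := hk

end compIFS

theorem edist_le_iSup_ediam_connectedComponentIn {X : Type*} [PseudoEMetricSpace X]
    {S t : Set X} (htS : t ⊆ S) (ht : IsPreconnected t) {x y : X} (hx : x ∈ t) (hy : y ∈ t) :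
    edist x y ≤ ⨆ z ∈ S, ediam (connectedComponentIn S z) := by
  have hsub : t ⊆ connectedComponentIn S x := ht.subset_connectedComponentIn hx htS
  calc edist x y ≤ ediam (connectedComponentIn S x) := edist_le_ediam_of_mem (hsub hx) (hsub hy)
    _ ≤ _ := le_biSup (fun z => ediam (connectedComponentIn S z)) (htS hx)

theorem isTotallyDisconnected_of_tendsto_iSup_ediam_connectedComponentIn {X : Type*}
    [EMetricSpace X] {s : Set X} {S : ℕ → Set X} (hs : ∀ k, s ⊆ S k)
    (hS : Tendsto (fun k => ⨆ z ∈ S k, ediam (connectedComponentIn (S k) z)) atTop (𝓝 0)) :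
    IsTotallyDisconnected s := by
  intro t hts ht x hx y hy
  have hxy : edist x y ≤ 0 :=
    ge_of_tendsto' hS fun k => edist_le_iSup_ediam_connectedComponentIn (hts.trans (hs k)) ht hx hy
  exact edist_le_zero.1 hxy

theorem attractor_totallyDisconnected_of_component_diam_tendsto_zero_general
    (d N : ℕ)
    (φ : Fin N → EuclideanSpace ℝ (Fin d) → EuclideanSpace ℝ (Fin d))
    (r : Fin N → NNReal) (hr : ∀ i, r i < 1) (hφ : ∀ i, LipschitzWith (r i) (φ i))
    (K : Set (EuclideanSpace ℝ (Fin d))) (hKcpt : IsCompact K)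
    (hKattr : K = ⋃ i, φ i '' K)
    (C : Set (EuclideanSpace ℝ (Fin d))) (hCne : C.Nonempty) (hCcpt : IsCompact C)
    (hCsub : (⋃ i, φ i '' C) ⊆ C)
    (hdiam : Tendsto
      (fun k : ℕ => ⨆ x ∈ (⋃ σ : Fin k → Fin N, compIFS φ σ '' C),
        EMetric.diam (connectedComponentIn (⋃ σ : Fin k → Fin N, compIFS φ σ '' C) x))
      atTop (𝓝 0)) :
    IsTotallyDisconnected K := by
  set ρ : NNReal := Finset.univ.sup r
  have hρ : ρ < 1 := (Finset.sup_lt_iff one_pos).2 fun i _ => hr i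
  have hKC : K ⊆ C := subset_of_isClosed_of_iUnion_image_subset φ hρ
    (lipschitzWith_compIFS φ hφ fun i => Finset.le_sup (Finset.mem_univ i))
    hKcpt.isBounded hKattr.subset hCne hCcpt.isClosed hCsub
  refine isTotallyDisconnected_of_tendsto_iSup_ediam_connectedComponentIn (fun k => ?_) hdiam
  exact (subset_iUnion_image_compIFS φ hKattr.subset k).trans
    (iUnion_mono fun σ => image_mono hKC)

/-- If the diameters of the connected components of the iterates
`⋃_{σ ∈ {1,…,N}^k} φ_σ(C)` tend to `0`, then the attractor `K` is totally disconnected. -/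
theorem attractor_totallyDisconnected_of_component_diam_tendsto_zero
    (d N : ℕ) (hN : 0 < N)
    (φ : Fin N → EuclideanSpace ℝ (Fin d) → EuclideanSpace ℝ (Fin d))
    (r : Fin N → NNReal) (hr : ∀ i, r i < 1) (hφ : ∀ i, LipschitzWith (r i) (φ i))
    (K : Set (EuclideanSpace ℝ (Fin d))) (hKne : K.Nonempty) (hKcpt : IsCompact K)
    (hKattr : K = ⋃ i, φ i '' K)
    (C : Set (EuclideanSpace ℝ (Fin d))) (hCne : C.Nonempty) (hCcpt : IsCompact C)
    (hCsub : (⋃ i, φ i '' C) ⊆ C)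
    (hdiam : Tendsto
      (fun k : ℕ => ⨆ x ∈ (⋃ σ : Fin k → Fin N, compIFS φ σ '' C),
        EMetric.diam (connectedComponentIn (⋃ σ : Fin k → Fin N, compIFS φ σ '' C) x))
      atTop (𝓝 0)) :
    IsTotallyDisconnected K :=
  attractor_totallyDisconnected_of_component_diam_tendsto_zero_general d N φ r hr hφ K hKcpt hKattr
    C hCne hCcpt hCsub hdiam
end

section
/- Let $\Phi = \{\varphi_1, \ldots, \varphi_N\}$ be a self-affine IFS on $\mathbb{R}^d$ with attractor $K$, let $C$ be the convex hull of $K$, and fix $1 \le k < d$. Then the following are equivalent: (1) for every $(d-k)$-dimensional affine subspace $W$ of $\mathbb{R}^d$ with $W \cap C \ne \varnothing$, there exists some $i \in \{1, \ldots, N\}$ with $W \cap \varphi_i(C) \ne \varnothing$; (2) for every $k$-dimensional linear subspace $V$ of $\mathbb{R}^d$, the orthogonal projections satisfy $\pi_V(K) = \pi_V(C)$. -/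
open Set Module

/-- Orthogonal projection onto a subspace, viewed as a map of the ambient space. -/
noncomputable def orthProj {d : ℕ} (W : Submodule ℝ (EuclideanSpace ℝ (Fin d)))
    (x : EuclideanSpace ℝ (Fin d)) : EuclideanSpace ℝ (Fin d) :=
  (W.orthogonalProjectionOnto x : EuclideanSpace ℝ (Fin d))

/-!
If every `(d-k)`-plane meeting `C` meets some `φᵢ(C)`, then pulling such a plane back by `φᵢ`
gives a `(d-k)`-plane through a point of `C`; iterating `n` times, every `(d-k)`-plane meeting
`C` contains a point of `C` within `rⁿ · diam C` of `K`, where `r < 1` bounds all `‖Tᵢ‖`.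
Applied to the planes `c + Vᗮ`, this puts `π_V(C)` in the closure of the compact set `π_V(K)`.
Conversely, if `π_{Vᗮ}(K) = π_{Vᗮ}(C)`, a plane `x + V` meeting `C` also meets
`K = ⋃ φᵢ(K) ⊆ ⋃ φᵢ(C)`.
-/

open Metric Function

section Translate

variable {R E F : Type*} [Ring R] [AddCommGroup E] [Module R E] [AddCommGroup F] [Module R F]

theorem mem_image_add_right_submodule {V : Submodule R E} {x z : E} :
    z ∈ (fun v => v + x) '' (V : Set E) ↔ z - x ∈ V := by
  simp [sub_eq_add_neg]

theorem mapsTo_image_add_right_comap (T : E →ₗ[R] F) (t : F) {V : Submodule R F} {x : F}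
    {u : E} (hu : T u + t ∈ (fun v => v + x) '' (V : Set F)) :
    MapsTo (fun y => T y + t) ((fun v => v + u) '' (V.comap T : Set E))
      ((fun v => v + x) '' (V : Set F)) := by
  intro w hw
  rw [mem_image_add_right_submodule] at hu hw ⊢
  have hsplit : T w + t - x = T (w - u) + (T u + t - x) := by rw [map_sub]; abel
  rw [hsplit]
  exact V.add_mem hw hu

theorem Submodule.finrank_comap_of_bijective {T : E →ₗ[R] F} (hT : Bijective T)
    (V : Submodule R F) : finrank R (V.comap T) = finrank R V := by
  rw [show T = LinearEquiv.ofBijective T hT from rfl, Submodule.comap_equiv_eq_map_symm,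
    LinearEquiv.finrank_map_eq]

end Translate

theorem mapsTo_convexHull_of_mapsTo {E F : Type*} [AddCommGroup E] [Module ℝ E]
    [AddCommGroup F] [Module ℝ F] (T : E →ₗ[ℝ] F) (t : F) {s : Set E} {s' : Set F}
    (h : MapsTo (fun x => T x + t) s s') :
    MapsTo (fun x => T x + t) (convexHull ℝ s) (convexHull ℝ s') := by
  have haff : (fun x => T x + t) = ⇑(T.toAffineMap + AffineMap.const ℝ E t) := by
    ext; simp
  rw [haff] at h ⊢
  rw [mapsTo_iff_image_subset, AffineMap.image_convexHull]
  exact convexHull_mono h.image_subset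

section Approximation

variable {E ι : Type*} [NormedAddCommGroup E] [NormedSpace ℝ E]
  {T : ι → E →L[ℝ] E} {t : ι → E} {K C : Set E} {m : ℕ} {r D : ℝ}

theorem exists_mem_inter_dist_le_pow_mul (hTinv : ∀ i, Bijective (T i)) (hr : 0 ≤ r)
    (hTr : ∀ i, ‖T i‖ ≤ r) (hK : ∀ i, MapsTo (fun y => T i y + t i) K K)
    (hC : ∀ i, MapsTo (fun y => T i y + t i) C C) (hD : ∀ w ∈ C, ∃ y ∈ K, dist w y ≤ D)
    (hmeet : ∀ V : Submodule ℝ E, finrank ℝ V = m → ∀ x,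
      ((fun v => v + x) '' (V : Set E) ∩ C).Nonempty →
      ∃ i, ((fun v => v + x) '' (V : Set E) ∩ (fun y => T i y + t i) '' C).Nonempty)
    (n : ℕ) (V : Submodule ℝ E) (hV : finrank ℝ V = m) (x : E)
    (hx : ((fun v => v + x) '' (V : Set E) ∩ C).Nonempty) :
    ∃ w ∈ (fun v => v + x) '' (V : Set E) ∩ C, ∃ y ∈ K, dist w y ≤ r ^ n * D := by
  induction n generalizing V x with
  | zero =>
    obtain ⟨w, hw⟩ := hx
    obtain ⟨y, hy, hwy⟩ := hD w hw.2
    exact ⟨w, hw, y, hy, by simpa using hwy⟩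
  | succ n ih =>
    obtain ⟨i, -, hzW, u, huC, rfl⟩ := hmeet V hV x hx
    have hu : u ∈ (fun v => v + u) '' (V.comap (T i : E →ₗ[ℝ] E) : Set E) ∩ C :=
      ⟨mem_image_add_right_submodule.2 (by simp), huC⟩
    obtain ⟨w, hw, y, hy, hwy⟩ := ih _ (by rwa [Submodule.finrank_comap_of_bijective (hTinv i)])
      u ⟨u, hu⟩
    refine ⟨T i w + t i, ⟨mapsTo_image_add_right_comap (T i : E →ₗ[ℝ] E) (t i) hzW hw.1,
      hC i hw.2⟩, T i y + t i, hK i hy, ?_⟩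
    calc dist (T i w + t i) (T i y + t i) = dist (T i w) (T i y) := dist_add_right _ _ _
      _ ≤ ‖T i‖ * dist w y := by simpa using (T i).lipschitz.dist_le_mul w y
      _ ≤ r * (r ^ n * D) := mul_le_mul (hTr i) hwy dist_nonneg hr
      _ = r ^ (n + 1) * D := by ring

end Approximation

section Euclidean

variable {d : ℕ} {V : Submodule ℝ (EuclideanSpace ℝ (Fin d))}
  {K C : Set (EuclideanSpace ℝ (Fin d))}

theorem orthProj_eq_starProjection (V : Submodule ℝ (EuclideanSpace ℝ (Fin d))) :
    orthProj V = V.starProjection :=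
  rfl

theorem orthProj_eq_orthProj_iff {a b : EuclideanSpace ℝ (Fin d)} :
    orthProj V a = orthProj V b ↔ a - b ∈ Vᗮ := by
  rw [orthProj_eq_starProjection, ← sub_eq_zero, ← map_sub,
    Submodule.starProjection_apply_eq_zero_iff]

theorem lipschitzWith_orthProj (V : Submodule ℝ (EuclideanSpace ℝ (Fin d))) :
    LipschitzWith 1 (orthProj V) :=
  V.lipschitzWith_starProjection

theorem finrank_orthogonal_eq_sub (V : Submodule ℝ (EuclideanSpace ℝ (Fin d))) :
    finrank ℝ Vᗮ = d - finrank ℝ V := by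
  have := V.finrank_add_finrank_orthogonal
  rw [finrank_euclideanSpace_fin] at this
  omega

theorem image_add_right_inter_nonempty_of_orthProj_image_subset
    (hCK : orthProj Vᗮ '' C ⊆ orthProj Vᗮ '' K) {x : EuclideanSpace ℝ (Fin d)}
    (hx : ((fun v => v + x) '' (V : Set (EuclideanSpace ℝ (Fin d))) ∩ C).Nonempty) :
    ((fun v => v + x) '' (V : Set (EuclideanSpace ℝ (Fin d))) ∩ K).Nonempty := by
  obtain ⟨c, hcW, hcC⟩ := hx
  obtain ⟨y, hyK, hyc⟩ := hCK ⟨c, hcC, rfl⟩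
  rw [orthProj_eq_orthProj_iff, Submodule.orthogonal_orthogonal] at hyc
  refine ⟨y, ?_, hyK⟩
  rw [mem_image_add_right_submodule] at hcW ⊢
  simpa using V.add_mem hyc hcW

theorem orthProj_image_subset_of_forall_exists_dist_lt (hK : IsCompact K)
    (h : ∀ c ∈ C, ∀ ε > 0, ∃ w, w - c ∈ Vᗮ ∧ ∃ y ∈ K, dist w y < ε) :
    orthProj V '' C ⊆ orthProj V '' K := by
  rintro _ ⟨c, hc, rfl⟩
  rw [← (hK.image (lipschitzWith_orthProj V).continuous).isClosed.closure_eq,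
    Metric.mem_closure_iff]
  intro ε hε
  obtain ⟨w, hwc, y, hy, hwy⟩ := h c hc ε hε
  refine ⟨orthProj V y, mem_image_of_mem _ hy, ?_⟩
  calc dist (orthProj V c) (orthProj V y) = dist (orthProj V w) (orthProj V y) := by
        rw [orthProj_eq_orthProj_iff.2 hwc]
    _ ≤ dist w y := by simpa using (lipschitzWith_orthProj V).dist_le_mul w y
    _ < ε := hwy

theorem orthProj_image_eq_of_forall_meet_firstLevel {k : ℕ} {ι : Type*} [Finite ι]
    {T : ι → EuclideanSpace ℝ (Fin d) →L[ℝ] EuclideanSpace ℝ (Fin d)}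
    {t : ι → EuclideanSpace ℝ (Fin d)} (hT : ∀ i, ‖T i‖ < 1)
    (hTinv : ∀ i, Bijective (T i))
    (hKcpt : IsCompact K) (hK : ∀ i, MapsTo (fun y => T i y + t i) K K)
    (hmeet : ∀ V : Submodule ℝ (EuclideanSpace ℝ (Fin d)), finrank ℝ V = d - k → ∀ x,
      ((fun v => v + x) '' (V : Set (EuclideanSpace ℝ (Fin d))) ∩ convexHull ℝ K).Nonempty →
      ∃ i, ((fun v => v + x) '' (V : Set (EuclideanSpace ℝ (Fin d))) ∩
        (fun y => T i y + t i) '' convexHull ℝ K).Nonempty)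
    (hV : finrank ℝ V = k) : orthProj V '' K = orthProj V '' convexHull ℝ K := by
  refine (image_mono (subset_convexHull ℝ K)).antisymm
    (orthProj_image_subset_of_forall_exists_dist_lt hKcpt fun c hc ε hε => ?_)
  have hCbdd : Bornology.IsBounded (convexHull ℝ K) := isBounded_convexHull.2 hKcpt.isBounded
  have hD : ∀ w ∈ convexHull ℝ K, ∃ y ∈ K, dist w y ≤ diam (convexHull ℝ K) := by
    intro w hw
    obtain ⟨y, hy⟩ := convexHull_nonempty_iff.1 ⟨w, hw⟩
    exact ⟨y, hy, dist_le_diam_of_mem hCbdd hw (subset_convexHull ℝ K hy)⟩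
  obtain ⟨r, hr1, hTr⟩ : ∃ r : NNReal, r < 1 ∧ ∀ i, ‖T i‖ ≤ r := by
    cases nonempty_fintype ι
    refine ⟨Finset.univ.sup fun i => ‖T i‖₊,
      (Finset.sup_lt_iff zero_lt_one).2 fun i _ => hT i, fun i => ?_⟩
    exact NNReal.coe_le_coe.2 (Finset.le_sup (f := fun i => ‖T i‖₊) (Finset.mem_univ i))
  obtain ⟨n, hn⟩ : ∃ n : ℕ, (r : ℝ) ^ n * diam (convexHull ℝ K) < ε := by
    have := (tendsto_pow_atTop_nhds_zero_of_lt_one r.2 hr1).mul_const (diam (convexHull ℝ K))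
    rw [zero_mul] at this
    exact (this.eventually (gt_mem_nhds hε)).exists
  obtain ⟨w, ⟨hwc, -⟩, y, hy, hwy⟩ := exists_mem_inter_dist_le_pow_mul hTinv r.2 hTr hK
    (fun i => mapsTo_convexHull_of_mapsTo _ _ (hK i)) hD hmeet n Vᗮ
    (by rw [finrank_orthogonal_eq_sub, hV]) c ⟨c, mem_image_add_right_submodule.2 (by simp), hc⟩
  exact ⟨w, mem_image_add_right_submodule.1 hwc, y, hy, hwy.trans_lt hn⟩

theorem exists_inter_image_nonempty_of_orthProj_image_eq {k : ℕ} (hkd : k ≤ d) {ι : Type*}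
    {φ : ι → EuclideanSpace ℝ (Fin d) → EuclideanSpace ℝ (Fin d)}
    (hKC : K ⊆ ⋃ i, φ i '' C)
    (hproj : ∀ V : Submodule ℝ (EuclideanSpace ℝ (Fin d)), finrank ℝ V = k →
      orthProj V '' K = orthProj V '' C)
    (hV : finrank ℝ V = d - k) {x : EuclideanSpace ℝ (Fin d)}
    (hx : ((fun v => v + x) '' (V : Set (EuclideanSpace ℝ (Fin d))) ∩ C).Nonempty) :
    ∃ i, ((fun v => v + x) '' (V : Set (EuclideanSpace ℝ (Fin d))) ∩ φ i '' C).Nonempty := by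
  have hVperp : finrank ℝ Vᗮ = k := by rw [finrank_orthogonal_eq_sub, hV]; omega
  obtain ⟨y, hyW, hyK⟩ :=
    image_add_right_inter_nonempty_of_orthProj_image_subset (hproj Vᗮ hVperp).superset hx
  obtain ⟨i, hi⟩ := mem_iUnion.1 (hKC hyK)
  exact ⟨i, y, hyW, hi⟩

end Euclidean

theorem selfAffine_veryThickShadows_iff_affineSubspaces_meet_firstLevel_general
    (d k N : ℕ) (hkd : k < d)
    (T : Fin N → (EuclideanSpace ℝ (Fin d) →L[ℝ] EuclideanSpace ℝ (Fin d)))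
    (t : Fin N → EuclideanSpace ℝ (Fin d))
    (hT : ∀ i, ‖T i‖ < 1) (hTinv : ∀ i, Function.Bijective (T i))
    (K : Set (EuclideanSpace ℝ (Fin d))) (hKcpt : IsCompact K)
    (hKattr : K = ⋃ i, (fun x => T i x + t i) '' K)
    (C : Set (EuclideanSpace ℝ (Fin d))) (hC : C = convexHull ℝ K) :
    (∀ (V : Submodule ℝ (EuclideanSpace ℝ (Fin d))), finrank ℝ V = d - k →
      ∀ x : EuclideanSpace ℝ (Fin d),
        (((fun v => v + x) '' (V : Set (EuclideanSpace ℝ (Fin d)))) ∩ C).Nonempty →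
        ∃ i, (((fun v => v + x) '' (V : Set (EuclideanSpace ℝ (Fin d)))) ∩
          ((fun y => T i y + t i) '' C)).Nonempty) ↔
    (∀ (V : Submodule ℝ (EuclideanSpace ℝ (Fin d))), finrank ℝ V = k →
      orthProj V '' K = orthProj V '' C) := by
  subst hC
  have hK : ∀ i, MapsTo (fun y => T i y + t i) K K := fun i y hy => by
    rw [hKattr]
    exact mem_iUnion_of_mem i (mem_image_of_mem _ hy)
  have hKC : K ⊆ ⋃ i, (fun y => T i y + t i) '' convexHull ℝ K :=
    hKattr.subset.trans (iUnion_mono fun i => image_mono (subset_convexHull ℝ K))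
  exact ⟨fun h V => orthProj_image_eq_of_forall_meet_firstLevel hT hTinv hKcpt hK h,
    fun h V hV x => exists_inter_image_nonempty_of_orthProj_image_eq hkd.le hKC h hV⟩

/-- Classification theorem: the attractor `K` of a self-affine IFS projects a very thick
shadow on every `k`-dimensional subspace iff every `(d-k)`-dimensional affine subspace
meeting `C = conv K` also meets some first-level image `φ_i(C)`. -/
theorem selfAffine_veryThickShadows_iff_affineSubspaces_meet_firstLevel
    (d k N : ℕ) (hk : 1 ≤ k) (hkd : k < d) (hN : 0 < N)
    (T : Fin N → (EuclideanSpace ℝ (Fin d) →L[ℝ] EuclideanSpace ℝ (Fin d)))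
    (t : Fin N → EuclideanSpace ℝ (Fin d))
    (hT : ∀ i, ‖T i‖ < 1) (hTinv : ∀ i, Function.Bijective (T i))
    (K : Set (EuclideanSpace ℝ (Fin d))) (hKne : K.Nonempty) (hKcpt : IsCompact K)
    (hKattr : K = ⋃ i, (fun x => T i x + t i) '' K)
    (C : Set (EuclideanSpace ℝ (Fin d))) (hC : C = convexHull ℝ K) :
    (∀ (V : Submodule ℝ (EuclideanSpace ℝ (Fin d))), finrank ℝ V = d - k →
      ∀ x : EuclideanSpace ℝ (Fin d),
        (((fun v => v + x) '' (V : Set (EuclideanSpace ℝ (Fin d)))) ∩ C).Nonempty →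
        ∃ i, (((fun v => v + x) '' (V : Set (EuclideanSpace ℝ (Fin d)))) ∩
          ((fun y => T i y + t i) '' C)).Nonempty) ↔
    (∀ (V : Submodule ℝ (EuclideanSpace ℝ (Fin d))), finrank ℝ V = k →
      orthProj V '' K = orthProj V '' C) :=
  selfAffine_veryThickShadows_iff_affineSubspaces_meet_firstLevel_general d k N hkd T t hT hTinv K
    hKcpt hKattr C hC
end

section
/- Let $\Phi = \{\varphi_1, \ldots, \varphi_N\}$ be a self-affine IFS on $\mathbb{R}^d$ with attractor $K$ and convex hull $C = \operatorname{conv}(K)$, and let $R_1, \ldots, R_r$ be the connected components of $\bigcup_{i=1}^N \varphi_i(C)$. Then the following are equivalent: (1) for every one-dimensional linear subspace $W$ of $\mathbb{R}^d$, $\pi_W(K) = \pi_W(C)$; (2) for every nonempty proper subset $I \subsetneq \{1, \ldots, r\}$, $\operatorname{conv}\big(\bigcup_{i \in I} R_i\big) \cap \operatorname{conv}\big(\bigcup_{i \in I^c} R_i\big) \ne \varnothing$. -/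
/-!
Write `S = ⋃ᵢ φᵢ(C)`, so that `K ⊆ S ⊆ C`. For a functional `f` the images `f(Rⱼ)` are intervals,
and condition (2) says that no level set of `f` splits the components into two nonempty groups
lying strictly on either side of it; by strict separation of disjoint compact convex sets, (2) is
equivalent to `f(S)` being an interval for every `f ≠ 0`. Shadows are functionals up to a linear
embedding of `ℝ`, and `f(C) = conv f(K)`, so thick shadows make `f(S) = f(C)` an interval.
Conversely, if every `f(S)` is an interval then `f(S) = f(C)` for all `f ≠ 0`. Since `f ∘ Tᵢ ≠ 0`,
this propagates to `f(Φⁿ(C)) = f(C)` for all iterates of the Hutchinson operator `Φ`, and `Φⁿ(C)`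
converges to `K`, whence `f(K) = f(C)`.
-/

open Set Module

open Filter Topology Function RealInnerProductSpace

theorem IsClosed.connectedComponentIn {α : Type*} [TopologicalSpace α] {F : Set α}
    (hF : IsClosed F) (x : α) : IsClosed (connectedComponentIn F x) := by
  by_cases hx : x ∈ F
  · refine isClosed_of_closure_subset <|
      isPreconnected_connectedComponentIn.closure.subset_connectedComponentIn
        (subset_closure (mem_connectedComponentIn hx)) ?_
    exact closure_minimal (connectedComponentIn_subset F x) hF
  · rw [connectedComponentIn_eq_empty hx]
    exact isClosed_empty

theorem IsPreconnected.subset_Iio_or_subset_Ioi {α : Type*} [LinearOrder α] [TopologicalSpace α]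
    [OrderClosedTopology α] {s : Set α} (hs : IsPreconnected s) {z : α}
    (hz : z ∉ s) : s ⊆ Iio z ∨ s ⊆ Ioi z := by
  by_contra! h
  obtain ⟨a, has, ha⟩ := not_subset.1 h.1
  obtain ⟨b, hbs, hb⟩ := not_subset.1 h.2
  simp only [mem_Iio, mem_Ioi, not_lt] at ha hb
  exact hz (hs.ordConnected.out hbs has ⟨hb, ha⟩)

section ConvexHull

variable {E : Type*} [NormedAddCommGroup E] [NormedSpace ℝ E] [FiniteDimensional ℝ E]

-- Carathéodory: `finrank ℝ E + 1` points suffice for a convex combination.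
theorem convexHull_eq_biUnion_image_stdSimplex (s : Set E) :
    convexHull ℝ s = ⋃ k ∈ Iic (finrank ℝ E + 1),
      (fun p : (Fin k → ℝ) × (Fin k → E) => ∑ i, p.1 i • p.2 i) ''
        (stdSimplex ℝ (Fin k) ×ˢ univ.pi fun _ => s) := by
  refine Subset.antisymm (fun x hx => ?_) ?_
  · obtain ⟨ι, _, z, w, hzs, hz, hw0, hw1, rfl⟩ := eq_pos_convex_span_of_mem_convexHull hx
    have hcard : Fintype.card ι ≤ finrank ℝ E + 1 :=
      hz.card_le_finrank_succ.trans (Nat.succ_le_succ (Submodule.finrank_le _))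
    let e := Fintype.equivFin ι
    refine mem_biUnion (x := Fintype.card ι) hcard
      ⟨(w ∘ e.symm, z ∘ e.symm), ⟨⟨fun i => (hw0 _).le, ?_⟩, fun i _ => hzs (mem_range_self _)⟩, ?_⟩
    · simpa only [comp_apply] using (e.symm.sum_comp w).trans hw1
    · exact e.symm.sum_comp fun i => w i • z i
  · simp only [iUnion_subset_iff]
    rintro k - _ ⟨⟨w, z⟩, ⟨hw, hz⟩, rfl⟩
    exact (convex_convexHull ℝ s).sum_mem (fun i _ => hw.1 i) hw.2
      fun i _ => subset_convexHull ℝ s (hz i (mem_univ i))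

theorem IsCompact.convexHull {s : Set E} (hs : IsCompact s) : IsCompact (convexHull ℝ s) := by
  rw [convexHull_eq_biUnion_image_stdSimplex]
  exact (finite_Iic _).isCompact_biUnion fun k _ =>
    ((isCompact_stdSimplex ℝ _).prod (isCompact_univ_pi fun _ => hs)).image (by fun_prop)

end ConvexHull

section ConvexHullsMeet

variable {E : Type*} {ι : Type*} [Fintype ι] [DecidableEq ι]

def ConvexHullsMeet [AddCommGroup E] [Module ℝ E] (R : ι → Set E) : Prop :=
  ∀ I : Finset ι, I.Nonempty → I ≠ Finset.univ →
    (convexHull ℝ (⋃ i ∈ I, R i) ∩ convexHull ℝ (⋃ i ∈ Iᶜ, R i)).Nonempty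

theorem ConvexHullsMeet.convex_image_iUnion [AddCommGroup E] [Module ℝ E] [TopologicalSpace E]
    {R : ι → Set E} (hmeet : ConvexHullsMeet R) (hR : ∀ j, IsPreconnected (R j))
    (f : E →L[ℝ] ℝ) : Convex ℝ (f '' ⋃ j, R j) := by
  classical
  rw [convex_iff_ordConnected]
  refine ⟨fun a ha b hb z hz => by_contra fun hzS => ?_⟩
  have hside : ∀ j, f '' R j ⊆ Iio z ∨ f '' R j ⊆ Ioi z := fun j =>
    ((hR j).image f f.continuous.continuousOn).subset_Iio_or_subset_Ioi
      fun hzj => hzS (image_mono (subset_iUnion R j) hzj)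
  let I := Finset.univ.filter fun j => f '' R j ⊆ Iio z
  have hI : ∀ j, j ∉ I → f '' R j ⊆ Ioi z := fun j hj =>
    (hside j).resolve_left fun h => hj (Finset.mem_filter.2 ⟨Finset.mem_univ j, h⟩)
  obtain ⟨x, hx, rfl⟩ := ha
  obtain ⟨y, hy, rfl⟩ := hb
  obtain ⟨i, hxi⟩ := mem_iUnion.1 hx
  obtain ⟨j, hyj⟩ := mem_iUnion.1 hy
  have hxz : f x < z := hz.1.lt_of_ne fun h => hzS ⟨x, hx, h⟩
  have hyz : z < f y := hz.2.lt_of_ne' fun h => hzS ⟨y, hy, h⟩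
  have hiI : i ∈ I := by
    by_contra hiI
    exact (hI i hiI (mem_image_of_mem f hxi)).not_gt hxz
  have hjI : j ∉ I := fun hjI => (Finset.mem_filter.1 hjI).2 (mem_image_of_mem f hyj) |>.not_gt hyz
  obtain ⟨q, hqI, hqIc⟩ := hmeet I ⟨i, hiI⟩ fun h => hjI (h ▸ Finset.mem_univ j)
  have hq₁ : f q < z := by
    refine convexHull_min (t := {w | f w < z}) ?_
      (convex_halfSpace_lt f.toLinearMap.isLinear z) hqI
    exact iUnion₂_subset fun k hk => image_subset_iff.1 (Finset.mem_filter.1 hk).2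
  have hq₂ : z < f q := by
    refine convexHull_min (t := {w | z < f w}) ?_
      (convex_halfSpace_gt f.toLinearMap.isLinear z) hqIc
    exact iUnion₂_subset fun k hk => image_subset_iff.1 (hI k (Finset.mem_compl.1 hk))
  exact hq₁.not_gt hq₂

variable [NormedAddCommGroup E] [NormedSpace ℝ E] [FiniteDimensional ℝ E]

theorem convexHullsMeet_of_forall_convex_image {R : ι → Set E} (hne : ∀ j, (R j).Nonempty)
    (hcpt : ∀ j, IsCompact (R j)) (hconv : ∀ f : E →L[ℝ] ℝ, f ≠ 0 → Convex ℝ (f '' ⋃ j, R j)) :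
    ConvexHullsMeet R := by
  intro I hI hIu
  by_contra hdisj
  rw [not_nonempty_iff_eq_empty, ← disjoint_iff_inter_eq_empty] at hdisj
  have hcptJ : ∀ J : Finset ι, IsCompact (convexHull ℝ (⋃ i ∈ J, R i)) := fun J =>
    (J.isCompact_biUnion fun i _ => hcpt i).convexHull
  obtain ⟨f, u, v, hfu, huv, hfv⟩ := geometric_hahn_banach_compact_closed (convex_convexHull ℝ _)
    (hcptJ I) (convex_convexHull ℝ _) (hcptJ Iᶜ).isClosed hdisj
  have hfI : ∀ i ∈ I, ∀ x ∈ R i, f x < u := fun i hi x hx =>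
    hfu x (subset_convexHull ℝ _ (mem_iUnion₂_of_mem hi hx))
  have hfIc : ∀ i ∉ I, ∀ x ∈ R i, v < f x := fun i hi x hx =>
    hfv x (subset_convexHull ℝ _ (mem_iUnion₂_of_mem (Finset.mem_compl.2 hi) hx))
  obtain ⟨i, hi⟩ := hI
  obtain ⟨j, hj⟩ : ∃ j, j ∉ I := by simpa [Finset.eq_univ_iff_forall] using hIu
  obtain ⟨x, hx⟩ := hne i
  obtain ⟨y, hy⟩ := hne j
  have hxu := hfI i hi x hx
  have hvy := hfIc j hj y hy
  have hf : f ≠ 0 := by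
    rintro rfl
    exact absurd (hxu.trans (huv.trans hvy)) (by simp)
  obtain ⟨q, hq, hfq⟩ := (hconv f hf).ordConnected.out (mem_image_of_mem f (mem_iUnion_of_mem i hx))
    (mem_image_of_mem f (mem_iUnion_of_mem j hy)) ⟨hxu.le, (huv.trans hvy).le⟩
  obtain ⟨k, hk⟩ := mem_iUnion.1 hq
  by_cases hkI : k ∈ I
  · exact (hfI k hkI q hk).ne hfq
  · linarith [hfIc k hkI q hk]

end ConvexHullsMeet

section OrthProj

variable {d : ℕ}

theorem inner_orthProj_of_mem {W : Submodule ℝ (EuclideanSpace ℝ (Fin d))}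
    {v : EuclideanSpace ℝ (Fin d)} (hv : v ∈ W) (x : EuclideanSpace ℝ (Fin d)) :
    ⟪v, orthProj W x⟫ = ⟪v, x⟫ := by
  rw [orthProj, ← Submodule.starProjection_apply,
    ← Submodule.inner_starProjection_left_eq_right, Submodule.starProjection_eq_self_iff.2 hv]

theorem orthProj_span_singleton (v x : EuclideanSpace ℝ (Fin d)) :
    orthProj (ℝ ∙ v) x = (⟪v, x⟫ / ‖v‖ ^ 2) • v := by
  rw [orthProj, ← Submodule.starProjection_apply, Submodule.starProjection_singleton]
  rfl

theorem forall_image_orthProj_eq_iff {A B : Set (EuclideanSpace ℝ (Fin d))} :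
    (∀ W : Submodule ℝ (EuclideanSpace ℝ (Fin d)), finrank ℝ W = 1 →
      orthProj W '' A = orthProj W '' B) ↔
      ∀ f : EuclideanSpace ℝ (Fin d) →L[ℝ] ℝ, f ≠ 0 → f '' A = f '' B := by
  constructor
  · intro h f hf
    set v := (InnerProductSpace.toDual ℝ _).symm f
    have hv : v ≠ 0 := by simpa [v] using hf
    have hfv : ⇑f = (fun y => ⟪v, y⟫) ∘ orthProj (ℝ ∙ v) := funext fun x => by
      rw [comp_apply, inner_orthProj_of_mem (Submodule.mem_span_singleton_self v),
        InnerProductSpace.toDual_symm_apply]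
    rw [hfv, image_comp, image_comp, h _ (finrank_span_singleton hv)]
  · intro h W hW
    obtain ⟨⟨v, hvW⟩, hv, -⟩ := finrank_eq_one_iff'.1 hW
    have hv : v ≠ 0 := by simpa using hv
    obtain rfl := eq_span_singleton_of_mem_of_finrank_eq_one hW hvW hv
    have hP : orthProj (ℝ ∙ v) = (fun c => (c / ‖v‖ ^ 2) • v) ∘ innerSL ℝ v :=
      funext (orthProj_span_singleton v)
    have hv' : innerSL ℝ v ≠ 0 := fun h0 => hv (by simpa using congr($h0 v))
    rw [hP, image_comp, image_comp, h _ hv']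

end OrthProj

section Hutchinson

variable {α β ι : Type*}

def hutchinson (φ : ι → α → α) (X : Set α) : Set α := ⋃ i, φ i '' X

theorem hutchinson_mono (φ : ι → α → α) {X Y : Set α} (h : X ⊆ Y) :
    hutchinson φ X ⊆ hutchinson φ Y :=
  iUnion_mono fun _ => image_mono h

theorem subset_hutchinson_convexHull [AddCommGroup α] [Module ℝ α] {φ : ι → α → α} {K : Set α}
    (hK : K ⊆ hutchinson φ K) : K ⊆ hutchinson φ (convexHull ℝ K) :=
  hK.trans (hutchinson_mono φ (subset_convexHull ℝ K))

theorem exists_dist_le_of_mem_iterate_hutchinson [PseudoMetricSpace α] {φ : ι → α → α}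
    {ρ : NNReal} (hφ : ∀ i, LipschitzWith ρ (φ i)) {K X : Set α} (hK : hutchinson φ K ⊆ K)
    {D : ℝ} (hX : ∀ x ∈ X, ∃ k ∈ K, dist x k ≤ D) (n : ℕ) :
    ∀ x ∈ (hutchinson φ)^[n] X, ∃ k ∈ K, dist x k ≤ ρ ^ n * D := by
  induction n with
  | zero => simpa using hX
  | succ n ih =>
    intro x hx
    rw [iterate_succ_apply'] at hx
    obtain ⟨i, y, hy, rfl⟩ := mem_iUnion.1 hx
    obtain ⟨k, hk, hyk⟩ := ih y hy
    refine ⟨φ i k, hK (mem_iUnion_of_mem i (mem_image_of_mem _ hk)), ?_⟩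
    calc dist (φ i y) (φ i k) ≤ ρ * dist y k := (hφ i).dist_le_mul y k
      _ ≤ ρ * (ρ ^ n * D) := by gcongr
      _ = ρ ^ (n + 1) * D := by ring

theorem mem_image_of_forall_mem_image_of_tendsto [PseudoMetricSpace α] [MetricSpace β]
    {f : α → β} {L : NNReal} (hf : LipschitzWith L f) {K : Set α} (hK : IsCompact K)
    {U : ℕ → Set α} {δ : ℕ → ℝ} (hδ : Tendsto δ atTop (𝓝 0))
    (hU : ∀ n, ∀ x ∈ U n, ∃ k ∈ K, dist x k ≤ δ n) {z : β} (hz : ∀ n, z ∈ f '' U n) :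
    z ∈ f '' K := by
  choose x hxU hfx using hz
  choose k hkK hk using fun n => hU n (x n) (hxU n)
  have hlim : Tendsto (f ∘ k) atTop (𝓝 z) := by
    refine tendsto_iff_dist_tendsto_zero.2 <|
      squeeze_zero (fun _ => dist_nonneg) (fun n => ?_) (by simpa using hδ.const_mul (L : ℝ))
    calc dist (f (k n)) z = dist (f (x n)) (f (k n)) := by rw [hfx, dist_comm]
      _ ≤ L * dist (x n) (k n) := hf.dist_le_mul _ _
      _ ≤ L * δ n := by gcongr; exact hk n
  exact (hK.image hf.continuous).isClosed.mem_of_tendsto hlim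
    (Eventually.of_forall fun n => mem_image_of_mem f (hkK n))

end Hutchinson

section SelfAffine

variable {E ι : Type*} [NormedAddCommGroup E] [NormedSpace ℝ E]
  (T : ι → E →L[ℝ] E) (t : ι → E)

theorem hutchinson_convexHull_subset {K : Set E}
    (hK : hutchinson (fun i x => T i x + t i) K ⊆ K) :
    hutchinson (fun i x => T i x + t i) (convexHull ℝ K) ⊆ convexHull ℝ K := by
  refine iUnion_subset fun i => ?_
  let φ : E →ᵃ[ℝ] E := (T i).toLinearMap.toAffineMap + AffineMap.const ℝ E (t i)
  calc (fun x => T i x + t i) '' convexHull ℝ K = φ '' convexHull ℝ K := rfl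
    _ = convexHull ℝ (φ '' K) := φ.image_convexHull K
    _ ⊆ convexHull ℝ K := convexHull_mono fun y hy => hK (mem_iUnion_of_mem i hy)

theorem image_hutchinson_affine (f : E →L[ℝ] ℝ) (X : Set E) :
    f '' hutchinson (fun i x => T i x + t i) X = ⋃ i, (· + f (t i)) '' ((f ∘L T i) '' X) := by
  simp only [hutchinson, image_iUnion, image_image, ContinuousLinearMap.comp_apply, map_add]

-- `f` sees `hutchinson _ X` only through the images `(f ∘L T i) '' X`, and `f ∘L T i ≠ 0`.
theorem image_iterate_hutchinson_eq (hT : ∀ i, Surjective (T i)) {C : Set E}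
    (hC : ∀ f : E →L[ℝ] ℝ, f ≠ 0 → f '' hutchinson (fun i x => T i x + t i) C = f '' C)
    (n : ℕ) : ∀ f : E →L[ℝ] ℝ, f ≠ 0 →
      f '' (hutchinson (fun i x => T i x + t i))^[n] C = f '' C := by
  induction n with
  | zero => exact fun _ _ => rfl
  | succ n ih =>
    intro f hf
    have hfT : ∀ i, f ∘L T i ≠ 0 := fun i h => hf <| ContinuousLinearMap.ext fun x => by
      obtain ⟨y, rfl⟩ := hT i x
      exact congr($h y)
    rw [iterate_succ_apply', image_hutchinson_affine, ← hC f hf, image_hutchinson_affine]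
    simp only [ih _ (hfT _)]

theorem exists_lipschitzWith_lt_one [Finite ι] (hT : ∀ i, ‖T i‖ < 1) :
    ∃ ρ : NNReal, ρ < 1 ∧ ∀ i, LipschitzWith ρ fun x => T i x + t i := by
  have := Fintype.ofFinite ι
  refine ⟨Finset.univ.sup fun i => ‖T i‖₊, (Finset.sup_lt_iff zero_lt_one).2 fun i _ => hT i,
    fun i => LipschitzWith.of_dist_le_mul fun x y => ?_⟩
  rw [dist_add_right]
  exact ((T i).lipschitz.weaken
    (Finset.le_sup (f := fun i => ‖T i‖₊) (Finset.mem_univ i))).dist_le_mul x y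

theorem image_eq_image_convexHull_of_convex_image_hutchinson [Finite ι] (hT : ∀ i, ‖T i‖ < 1)
    (hTs : ∀ i, Surjective (T i)) {K : Set E} (hK : IsCompact K)
    (hKφ : K = hutchinson (fun i x => T i x + t i) K)
    (hconv : ∀ f : E →L[ℝ] ℝ, f ≠ 0 →
      Convex ℝ (f '' hutchinson (fun i x => T i x + t i) (convexHull ℝ K)))
    (f : E →L[ℝ] ℝ) (hf : f ≠ 0) : f '' K = f '' convexHull ℝ K := by
  set Φ := hutchinson fun i x => T i x + t i
  have hKS : K ⊆ Φ (convexHull ℝ K) := subset_hutchinson_convexHull hKφ.le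
  have hSC : Φ (convexHull ℝ K) ⊆ convexHull ℝ K := hutchinson_convexHull_subset T t hKφ.ge
  have hS : ∀ g : E →L[ℝ] ℝ, g ≠ 0 → g '' Φ (convexHull ℝ K) = g '' convexHull ℝ K :=
    fun g hg => (image_mono hSC).antisymm <| (g.toLinearMap.image_convexHull K).trans_subset
      (convexHull_min (image_mono hKS) (hconv g hg))
  obtain ⟨ρ, hρ, hφ⟩ := exists_lipschitzWith_lt_one T t hT
  have hbdd := isBounded_convexHull.2 hK.isBounded
  have hdiam : ∀ x ∈ convexHull ℝ K, ∃ k ∈ K, dist x k ≤ Metric.diam (convexHull ℝ K) :=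
    fun x hx => (convexHull_nonempty_iff.1 ⟨x, hx⟩).imp fun k hk =>
      ⟨hk, Metric.dist_le_diam_of_mem hbdd hx (subset_convexHull ℝ K hk)⟩
  refine (image_mono (subset_convexHull ℝ K)).antisymm fun z hz => ?_
  refine mem_image_of_forall_mem_image_of_tendsto f.lipschitz hK
    (by simpa using (tendsto_pow_atTop_nhds_zero_of_lt_one ρ.2 hρ).mul_const _)
    (exists_dist_le_of_mem_iterate_hutchinson hφ hKφ.ge hdiam) fun n => ?_
  rwa [image_iterate_hutchinson_eq T t hTs hS n f hf]

end SelfAffine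

theorem selfAffine_veryThickShadows_iff_components_convexHulls_meet_general
    (d N : ℕ)
    (T : Fin N → (EuclideanSpace ℝ (Fin d) →L[ℝ] EuclideanSpace ℝ (Fin d)))
    (t : Fin N → EuclideanSpace ℝ (Fin d))
    (hT : ∀ i, ‖T i‖ < 1) (hTinv : ∀ i, Function.Bijective (T i))
    (K : Set (EuclideanSpace ℝ (Fin d))) (hKcpt : IsCompact K)
    (hKattr : K = ⋃ i, (fun x => T i x + t i) '' K)
    (C : Set (EuclideanSpace ℝ (Fin d))) (hC : C = convexHull ℝ K)
    (r : ℕ) (R : Fin r → Set (EuclideanSpace ℝ (Fin d)))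
    -- `R 1, …, R r` are exactly the connected components of the first-level union:
    (hRcover : (⋃ i, (fun x => T i x + t i) '' C) = ⋃ j, R j)
    (hRne : ∀ j, (R j).Nonempty)
    (hRcomp : ∀ j, ∀ x ∈ R j,
      R j = connectedComponentIn (⋃ i, (fun x => T i x + t i) '' C) x) :
    (∀ (W : Submodule ℝ (EuclideanSpace ℝ (Fin d))), finrank ℝ W = 1 →
      orthProj W '' K = orthProj W '' C) ↔
    (∀ I : Finset (Fin r), I.Nonempty → I ≠ Finset.univ →
      ((convexHull ℝ (⋃ i ∈ I, R i)) ∩ (convexHull ℝ (⋃ i ∈ Iᶜ, R i))).Nonempty) := by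
  subst hC
  set S := ⋃ i, (fun x => T i x + t i) '' convexHull ℝ K
  have hScpt : IsCompact S := isCompact_iUnion fun i => hKcpt.convexHull.image (by fun_prop)
  have hRcpt : ∀ j, IsCompact (R j) := fun j => by
    obtain ⟨x, hx⟩ := hRne j
    rw [hRcomp j x hx]
    exact hScpt.of_isClosed_subset (hScpt.isClosed.connectedComponentIn x)
      (connectedComponentIn_subset _ x)
  have hRpc : ∀ j, IsPreconnected (R j) := fun j => by
    obtain ⟨x, hx⟩ := hRne j
    rw [hRcomp j x hx]
    exact isPreconnected_connectedComponentIn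
  rw [forall_image_orthProj_eq_iff]
  constructor
  · intro h
    refine convexHullsMeet_of_forall_convex_image hRne hRcpt fun f hf => ?_
    have hKS : K ⊆ S := subset_hutchinson_convexHull hKattr.le
    have hSC : S ⊆ convexHull ℝ K := hutchinson_convexHull_subset T t hKattr.ge
    rw [← hRcover, show f '' S = f '' convexHull ℝ K from
      (image_mono hSC).antisymm ((h f hf).ge.trans (image_mono hKS))]
    exact (convex_convexHull ℝ K).linear_image f.toLinearMap
  · intro h f hf
    refine image_eq_image_convexHull_of_convex_image_hutchinson T t hT (fun i => (hTinv i).2)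
      hKcpt hKattr (fun g _ => ?_) f hf
    change Convex ℝ (g '' S)
    exact hRcover ▸ ConvexHullsMeet.convex_image_iUnion h hRpc g

/-- Classification theorem via connected components: the attractor `K` of a self-affine
IFS projects a very thick shadow on every 1-dimensional subspace iff for every nonempty
proper subset `I` of the index set of the connected components `R₁, …, R_r` of
`⋃ᵢ φᵢ(C)`, the convex hulls of `⋃_{i ∈ I} Rᵢ` and `⋃_{i ∈ Iᶜ} Rᵢ` intersect. -/
theorem selfAffine_veryThickShadows_iff_components_convexHulls_meet
    (d N : ℕ) (hd : 1 ≤ d) (hN : 0 < N)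
    (T : Fin N → (EuclideanSpace ℝ (Fin d) →L[ℝ] EuclideanSpace ℝ (Fin d)))
    (t : Fin N → EuclideanSpace ℝ (Fin d))
    (hT : ∀ i, ‖T i‖ < 1) (hTinv : ∀ i, Function.Bijective (T i))
    (K : Set (EuclideanSpace ℝ (Fin d))) (hKne : K.Nonempty) (hKcpt : IsCompact K)
    (hKattr : K = ⋃ i, (fun x => T i x + t i) '' K)
    (C : Set (EuclideanSpace ℝ (Fin d))) (hC : C = convexHull ℝ K)
    (r : ℕ) (R : Fin r → Set (EuclideanSpace ℝ (Fin d)))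
    -- `R 1, …, R r` are exactly the connected components of the first-level union:
    (hRcover : (⋃ i, (fun x => T i x + t i) '' C) = ⋃ j, R j)
    (hRne : ∀ j, (R j).Nonempty)
    (hRcomp : ∀ j, ∀ x ∈ R j,
      R j = connectedComponentIn (⋃ i, (fun x => T i x + t i) '' C) x)
    (hRdisj : Pairwise (Function.onFun Disjoint R)) :
    (∀ (W : Submodule ℝ (EuclideanSpace ℝ (Fin d))), finrank ℝ W = 1 →
      orthProj W '' K = orthProj W '' C) ↔
    (∀ I : Finset (Fin r), I.Nonempty → I ≠ Finset.univ →
      ((convexHull ℝ (⋃ i ∈ I, R i)) ∩ (convexHull ℝ (⋃ i ∈ Iᶜ, R i))).Nonempty) :=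
  selfAffine_veryThickShadows_iff_components_convexHulls_meet_general d N T t hT hTinv K hKcpt
    hKattr C hC r R hRcover hRne hRcomp
end

section
/- Let $A_0, \ldots, A_d$ be affinely independent points in $\mathbb{R}^d$, let $0 < r < 1$ and $t \in \mathbb{R}^d$ be such that, setting $A_i' = r A_i + t$ for each $i$, the simplex $\operatorname{conv}\{A_0', \ldots, A_d'\}$ lies in the interior of $\operatorname{conv}\{A_0, \ldots, A_d\}$. For each $i \in \{0, 1, \ldots, d\}$ let $L_i = [A_i, A_{i+1}']$ denote the closed segment from $A_i$ to $A_{i+1}'$, with indices taken modulo $d+1$. Then for every nonempty proper subset $I \subsetneq \{0, 1, \ldots, d\}$, $\operatorname{conv}\big(\bigcup_{i \in I} L_i\big) \cap \operatorname{conv}\big(\bigcup_{i \in I^c} L_i\big) \ne \varnothing$. -/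
open Set

/-!
Pick `k ∈ I ∌ k + 1` and `m ∉ I ∋ m + 1`, which exist because a nonempty proper subset of the
cycle `ℤ/(d+1)` is left somewhere in both directions. Then `A_{m+1}`, `A'_{k+1}` are endpoints
of segments `L_i` with `i ∈ I`, and `A_{k+1}`, `A'_{m+1}` of segments with `i ∉ I`.
Since `A'_{k+1} - A'_{m+1} = r (A_{k+1} - A_{m+1})`, the segments `[A_{m+1}, A'_{k+1}]` and
`[A_{k+1}, A'_{m+1}]` are the diagonals of a trapezoid, so they cross.
-/

open Fin.NatCast in
theorem Fin.exists_mem_add_one_notMem {n : ℕ} {I : Finset (Fin (n + 1))} (hne : I.Nonempty)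
    (hI : I ≠ Finset.univ) : ∃ k ∈ I, k + 1 ∉ I := by
  by_contra! hclosed
  obtain ⟨i, hi⟩ := hne
  have hshift : ∀ m : ℕ, i + (m : Fin (n + 1)) ∈ I := by
    intro m
    induction m with
    | zero => simpa using hi
    | succ m ih => simpa [Nat.cast_succ, add_assoc] using hclosed _ ih
  refine hI (Finset.eq_univ_of_forall fun j => ?_)
  simpa [Fin.cast_val_eq_self] using hshift (j - i).val

theorem segment_inter_segment_nonempty_of_smul_add {𝕜 E : Type*} [Field 𝕜] [LinearOrder 𝕜]
    [IsStrictOrderedRing 𝕜] [AddCommGroup E] [Module 𝕜 E] {r : 𝕜} (hr : 0 ≤ r)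
    (x y t : E) :
    (segment 𝕜 x (r • y + t) ∩ segment 𝕜 y (r • x + t)).Nonempty := by
  have h1r : 0 < 1 + r := by linarith
  have hsum : r / (1 + r) + 1 / (1 + r) = 1 := by rw [← add_div, add_comm, div_self h1r.ne']
  have hnn₁ : 0 ≤ r / (1 + r) := by positivity
  have hnn₂ : 0 ≤ 1 / (1 + r) := by positivity
  refine ⟨(r / (1 + r)) • x + (1 / (1 + r)) • (r • y + t),
    ⟨_, _, hnn₁, hnn₂, hsum, rfl⟩, ⟨_, _, hnn₁, hnn₂, hsum, ?_⟩⟩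
  have hr' : 1 / (1 + r) * r = r / (1 + r) := by field_simp
  simp only [smul_add, smul_smul, hr']
  abel

theorem simplex_segments_convexHulls_meet_general
    (d : ℕ) (A : Fin (d + 1) → EuclideanSpace ℝ (Fin d))
    (r : ℝ) (hr0 : 0 < r) (t : EuclideanSpace ℝ (Fin d))
    (A' : Fin (d + 1) → EuclideanSpace ℝ (Fin d)) (hA' : ∀ i, A' i = r • A i + t)
    (L : Fin (d + 1) → Set (EuclideanSpace ℝ (Fin d)))
    (hL : ∀ i, L i = segment ℝ (A i) (A' (i + 1))) :
    ∀ I : Finset (Fin (d + 1)), I.Nonempty → I ≠ Finset.univ →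
      ((convexHull ℝ (⋃ i ∈ I, L i)) ∩ (convexHull ℝ (⋃ i ∈ Iᶜ, L i))).Nonempty := by
  intro I hne hI
  obtain ⟨k, hk, hk1⟩ := Fin.exists_mem_add_one_notMem hne hI
  obtain ⟨m, hm, hm1⟩ := Fin.exists_mem_add_one_notMem (I := Iᶜ)
    ((Finset.compl_ne_univ_iff_nonempty Iᶜ).mp (by rwa [compl_compl]))
    ((Finset.compl_ne_univ_iff_nonempty I).mpr hne)
  rw [Finset.mem_compl, not_not] at hm1
  have ends_mem {S : Finset (Fin (d + 1))} {i : Fin (d + 1)} (hi : i ∈ S) :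
      A i ∈ ⋃ j ∈ S, L j ∧ A' (i + 1) ∈ ⋃ j ∈ S, L j := by
    refine ⟨mem_biUnion hi ?_, mem_biUnion hi ?_⟩ <;> rw [hL]
    exacts [left_mem_segment ℝ _ _, right_mem_segment ℝ _ _]
  obtain ⟨p, hpI, hpIc⟩ :=
    segment_inter_segment_nonempty_of_smul_add hr0.le (A (m + 1)) (A (k + 1)) t
  simp only [← hA'] at hpI hpIc
  exact ⟨p, segment_subset_convexHull (ends_mem hm1).1 (ends_mem hk).2 hpI,
    segment_subset_convexHull (ends_mem (Finset.mem_compl.mpr hk1)).1 (ends_mem hm).2 hpIc⟩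

/-- Proposition on simplices: with `A₀, …, A_d` affinely independent, `Aᵢ' = r Aᵢ + t`
a scaled copy lying in the interior of the simplex, and `Lᵢ = [Aᵢ, A'_{i+1}]` (indices
mod `d+1`), the convex hulls of `⋃_{i ∈ I} Lᵢ` and `⋃_{i ∈ Iᶜ} Lᵢ` intersect for every
nonempty proper `I ⊆ {0, …, d}`. -/
theorem simplex_segments_convexHulls_meet
    (d : ℕ) (hd : 1 ≤ d) (A : Fin (d + 1) → EuclideanSpace ℝ (Fin d))
    (hA : AffineIndependent ℝ A)
    (r : ℝ) (hr0 : 0 < r) (hr1 : r < 1) (t : EuclideanSpace ℝ (Fin d))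
    (A' : Fin (d + 1) → EuclideanSpace ℝ (Fin d)) (hA' : ∀ i, A' i = r • A i + t)
    (hinside : convexHull ℝ (Set.range A') ⊆ interior (convexHull ℝ (Set.range A)))
    (L : Fin (d + 1) → Set (EuclideanSpace ℝ (Fin d)))
    (hL : ∀ i, L i = segment ℝ (A i) (A' (i + 1))) :
    ∀ I : Finset (Fin (d + 1)), I.Nonempty → I ≠ Finset.univ →
      ((convexHull ℝ (⋃ i ∈ I, L i)) ∩ (convexHull ℝ (⋃ i ∈ Iᶜ, L i))).Nonempty :=
  simplex_segments_convexHulls_meet_general d A r hr0 t A' hA' L hL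
end

section
/- Let $d \ge 2$ and let $B$ be the closed unit ball in $\mathbb{R}^d$. Then there is no totally disconnected Borel set $K \subseteq \mathbb{R}^d$ such that $\operatorname{conv}(K) = B$ and $\pi_W(K) = \pi_W(B)$ for every one-dimensional linear subspace $W$ of $\mathbb{R}^d$. -/
/-!
Every point of the unit sphere is an extreme point of the ball, and the extreme points of
`convexHull ℝ K` lie in `K`; so `K` contains the sphere, which is connected for `d ≥ 2` and has
more than one point.
-/

open Set Module Metric

section

variable {E : Type*} [NormedAddCommGroup E] [NormedSpace ℝ E]

theorem Metric.not_subsingleton_sphere [Nontrivial E] (x : E) {r : ℝ} (hr : 0 < r) :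
    ¬ (sphere x r).Subsingleton := by
  obtain ⟨v, hv⟩ := (NormedSpace.sphere_nonempty (x := (0 : E))).mpr hr.le
  rw [mem_sphere_zero_iff_norm] at hv
  have hv0 : v ≠ 0 := norm_pos_iff.mp (hv ▸ hr)
  intro hsub
  have hplus : x + v ∈ sphere x r := by simp [hv]
  have hminus : x - v ∈ sphere x r := by simp [hv]
  have hv_neg : v = -v := add_left_cancel (sub_eq_add_neg x v ▸ hsub hplus hminus)
  have h2v : (2 : ℝ) • v = 0 := by
    rw [two_smul]
    nth_rewrite 2 [hv_neg]
    exact add_neg_cancel v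
  exact hv0 ((smul_eq_zero.mp h2v).resolve_left two_ne_zero)

theorem sphere_subset_of_convexHull_eq_closedBall [StrictConvexSpace ℝ E] {K : Set E} {x : E}
    {r : ℝ} (hr : r ≠ 0) (hK : convexHull ℝ K = closedBall x r) : sphere x r ⊆ K :=
  (StrictConvexSpace.sphere_subset_extremePoints_closedBall x hr).trans
    (hK ▸ extremePoints_convexHull_subset)

theorem not_isTotallyDisconnected_of_convexHull_eq_closedBall [StrictConvexSpace ℝ E]
    (hE : 1 < Module.rank ℝ E) {K : Set E} {x : E} {r : ℝ} (hr : 0 < r)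
    (hK : convexHull ℝ K = closedBall x r) : ¬ IsTotallyDisconnected K := by
  have : Nontrivial E := rank_pos_iff_nontrivial.mp (zero_lt_one.trans hE)
  intro hK_td
  exact Metric.not_subsingleton_sphere x hr <|
    hK_td _ (sphere_subset_of_convexHull_eq_closedBall hr.ne' hK) (isPreconnected_sphere hE x r)

end

/-- The closed unit ball in `ℝ^d` (`d ≥ 2`) is not 1-dimensional fractal-decomposable
with a totally disconnected Borel set. -/
theorem ball_not_fractalDecomposable (d : ℕ) (hd : 2 ≤ d) :
    ¬ ∃ K : Set (EuclideanSpace ℝ (Fin d)),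
      MeasurableSet K ∧ IsTotallyDisconnected K ∧
      convexHull ℝ K = closedBall (0 : EuclideanSpace ℝ (Fin d)) 1 ∧
      (∀ (W : Submodule ℝ (EuclideanSpace ℝ (Fin d))), finrank ℝ W = 1 →
        orthProj W '' K = orthProj W '' (closedBall (0 : EuclideanSpace ℝ (Fin d)) 1)) := by
  rintro ⟨K, -, hK_td, hK_hull, -⟩
  have hrank : 1 < Module.rank ℝ (EuclideanSpace ℝ (Fin d)) := by
    rw [← finrank_eq_rank, finrank_euclideanSpace_fin]
    exact_mod_cast hd
  exact not_isTotallyDisconnected_of_convexHull_eq_closedBall hrank one_pos hK_hull hK_td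
end
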